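/- In the group G = (ℤ/3ℤ)⁴ of order 81, the four 5-element subsets B₁ = {(0,0,0,0),(0,0,0,1),(0,0,1,0),(0,1,0,0),(1,0,0,0)}, B₂ = {(0,0,0,0),(0,0,1,1),(0,1,1,2),(1,2,1,0),(2,0,2,0)}, B₃ = {(0,0,0,0),(0,1,1,0),(1,1,1,1),(1,2,2,2),(2,0,2,2)}, B₄ = {(0,0,0,0),(0,1,2,1),(1,0,1,2),(1,2,2,0),(2,1,0,2)} form an (81,5,1)-difference family, and hence their translates form a Steiner system S(2,5,81). -/
import Mathlib


/-- Number of ordered pairs of distinct elements of `B` whose difference is `g`. -/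
def dcount {G : Type*} [AddCommGroup G] [DecidableEq G] (B : Finset G) (g : G) : ℕ :=
  ((B ×ˢ B).filter (fun p => p.1 ≠ p.2 ∧ p.1 - p.2 = g)).card
def B9 : Fin 4 → Finset (ZMod 3 × ZMod 3 × ZMod 3 × ZMod 3) :=
  ![{(0,0,0,0),(0,0,0,1),(0,0,1,0),(0,1,0,0),(1,0,0,0)},
    {(0,0,0,0),(0,0,1,1),(0,1,1,2),(1,2,1,0),(2,0,2,0)},
    {(0,0,0,0),(0,1,1,0),(1,1,1,1),(1,2,2,2),(2,0,2,2)},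
    {(0,0,0,0),(0,1,2,1),(1,0,1,2),(1,2,2,0),(2,1,0,2)}]

set_option maxRecDepth 8000

abbrev G4 := ZMod 3 × ZMod 3 × ZMod 3 × ZMod 3

lemma sum_dcount : ∀ g : G4, g ≠ 0 →
    (∑ i : Fin 4, dcount (B9 i) g) = 1 := by decide

lemma key (g : G4) (hg : g ≠ 0) :
    ∃! t : Fin 4 × G4 × G4,
      t.2.1 ∈ B9 t.1 ∧ t.2.2 ∈ B9 t.1 ∧ t.2.1 ≠ t.2.2 ∧ t.2.1 - t.2.2 = g := by
  have h1 := sum_dcount g hg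
  have hcard : (Finset.univ.filter (fun t : Fin 4 × G4 × G4 =>
      t.2.1 ∈ B9 t.1 ∧ t.2.2 ∈ B9 t.1 ∧ t.2.1 ≠ t.2.2 ∧ t.2.1 - t.2.2 = g)).card = 1 := by
    rw [Finset.card_eq_sum_card_fiberwise
      (f := Prod.fst) (t := (Finset.univ : Finset (Fin 4))) (fun x _ => Finset.mem_univ _)]
    rw [← h1]
    refine Finset.sum_congr rfl fun i _ => ?_
    refine Finset.card_bij' (fun t _ => t.2) (fun p _ => (i, p)) ?hi ?hj ?li ?ri
    case hi =>
      intro t ht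
      obtain ⟨ht1, ht2⟩ := Finset.mem_filter.mp ht
      obtain ⟨-, hp⟩ := Finset.mem_filter.mp ht1
      rw [ht2] at hp
      exact Finset.mem_filter.mpr ⟨Finset.mem_product.mpr ⟨hp.1, hp.2.1⟩, hp.2.2.1, hp.2.2.2⟩
    case hj =>
      intro p hp
      obtain ⟨hmem, hpred⟩ := Finset.mem_filter.mp hp
      obtain ⟨h1, h2⟩ := Finset.mem_product.mp hmem
      exact Finset.mem_filter.mpr
        ⟨Finset.mem_filter.mpr ⟨Finset.mem_univ _, h1, h2, hpred.1, hpred.2⟩, rfl⟩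
    case li =>
      intro t ht
      have hfst := (Finset.mem_filter.mp ht).2
      show (i, t.2) = t
      rw [← hfst]
    case ri =>
      intro p hp
      rfl
  rw [Finset.card_eq_one] at hcard
  obtain ⟨t, ht⟩ := hcard
  refine ⟨t, ?_, ?_⟩
  · have : t ∈ Finset.univ.filter (fun t : Fin 4 × G4 × G4 =>
      t.2.1 ∈ B9 t.1 ∧ t.2.2 ∈ B9 t.1 ∧ t.2.1 ≠ t.2.2 ∧ t.2.1 - t.2.2 = g) := by
      rw [ht]; exact Finset.mem_singleton_self t
    exact (Finset.mem_filter.mp this).2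
  · intro s hs
    have : s ∈ Finset.univ.filter (fun t : Fin 4 × G4 × G4 =>
      t.2.1 ∈ B9 t.1 ∧ t.2.2 ∈ B9 t.1 ∧ t.2.1 ≠ t.2.2 ∧ t.2.1 - t.2.2 = g) :=
      Finset.mem_filter.mpr ⟨Finset.mem_univ _, hs⟩
    rw [ht] at this
    exact Finset.mem_singleton.mp this

theorem stmt_9 :
    (∀ g : ZMod 3 × ZMod 3 × ZMod 3 × ZMod 3, g ≠ 0 →
        (∑ i : Fin 4, dcount (B9 i) g) = 1) ∧
    (∀ C : Finset (ZMod 3 × ZMod 3 × ZMod 3 × ZMod 3),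
        (∃ i : Fin 4, ∃ g : ZMod 3 × ZMod 3 × ZMod 3 × ZMod 3,
            C = (B9 i).image (· + g)) → C.card = 5) ∧
    (∀ p q : ZMod 3 × ZMod 3 × ZMod 3 × ZMod 3, p ≠ q →
        ∃! C : Finset (ZMod 3 × ZMod 3 × ZMod 3 × ZMod 3),
          (∃ i : Fin 4, ∃ g : ZMod 3 × ZMod 3 × ZMod 3 × ZMod 3,
              C = (B9 i).image (· + g)) ∧ p ∈ C ∧ q ∈ C) := by
  refine ⟨sum_dcount, ?_, ?_⟩
  · rintro C ⟨i, g, rfl⟩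
    rw [Finset.card_image_of_injective _ (add_left_injective g)]
    revert i; decide
  · intro p q hpq
    have hd : p - q ≠ 0 := sub_ne_zero_of_ne hpq
    obtain ⟨⟨i, a, b⟩, ⟨ha, hb, hab, habd⟩, huniq⟩ := key (p - q) hd
    refine ⟨(B9 i).image (· + (p - a)), ⟨⟨i, p - a, rfl⟩, ?_, ?_⟩, ?_⟩
    · exact Finset.mem_image.mpr ⟨a, ha, by abel⟩
    · refine Finset.mem_image.mpr ⟨b, hb, ?_⟩
      show b + (p - a) = q
      have h0 : a - b - (p - q) = 0 := by rw [habd]; abel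
      have h1 : b + (p - a) - q = -(a - b - (p - q)) := by abel
      have h2 : b + (p - a) - q = 0 := by rw [h1, h0, neg_zero]
      exact sub_eq_zero.mp h2
    · rintro C ⟨⟨j, h, rfl⟩, hp, hq⟩
      obtain ⟨a', ha', hpa'⟩ := Finset.mem_image.mp hp
      obtain ⟨b', hb', hqb'⟩ := Finset.mem_image.mp hq
      have hne : a' ≠ b' := by
        rintro rfl; apply hpq; rw [← hpa', ← hqb']
      have hdiff : a' - b' = p - q := by
        rw [← hpa', ← hqb']; abel
      have heq := huniq (j, a', b') ⟨ha', hb', hne, hdiff⟩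
      injection heq with hj1 hrest
      injection hrest with hj2 hj3
      subst hj1; subst hj2; subst hj3
      have hh : h = p - a' := eq_sub_of_add_eq' hpa'
      rw [hh]
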